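/- arXiv:1904.05618 — 5 statements merged into one kernel-verified Lean document; each statement's English description precedes it below -/
import Mathlib

section
/- Let λ > 0 and k a positive integer, and set α = 1 + (1+λ)^k/(λ(1+kλ)), β = (1+λ)/(1+kλ). Then for every non-negative integer d, α·λ/(λ+(1+λ)^d) + β·d·λ·(1+λ)^{d-1}/(λ+(1+λ)^d) ≥ 1. -/
/-! Clearing denominators, the inequality becomes `(1 + (k - d) λ) (1 + λ)^d ≤ (1 + λ)^k`, which is
Bernoulli's inequality `1 + m λ ≤ (1 + λ)^m` for the integer `m = k - d`, multiplied by `(1 + λ)^d`.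
For negative `m` Bernoulli's inequality follows from the natural-exponent case applied to
`(1 + λ)⁻¹ = 1 + b`, where `b = -λ / (1 + λ) ≥ -λ`. -/

section Bernoulli

variable {K : Type*} [Field K] [LinearOrder K] [IsStrictOrderedRing K] {a : K}

theorem one_add_mul_le_zpow (ha : -1 < a) (m : ℤ) : 1 + m * a ≤ (1 + a) ^ m := by
  obtain ⟨n, rfl | rfl⟩ := m.eq_nat_or_neg
  · simpa using one_add_mul_le_pow (by linarith) n
  · have hpos : 0 < 1 + a := by linarith
    have hinv : 0 < (1 + a)⁻¹ := inv_pos.2 hpos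
    -- `(1 + a)⁻¹ - (1 - a) = a² (1 + a)⁻¹`
    have hb : -a ≤ (1 + a)⁻¹ - 1 := by
      nlinarith [mul_inv_cancel₀ hpos.ne', mul_nonneg hinv.le (sq_nonneg a)]
    calc 1 + ((-n : ℤ) : K) * a = 1 + n * (-a) := by push_cast; ring
      _ ≤ 1 + n * ((1 + a)⁻¹ - 1) := by gcongr
      _ ≤ (1 + ((1 + a)⁻¹ - 1)) ^ n := one_add_mul_le_pow (by linarith) n
      _ = (1 + a) ^ (-(n : ℤ)) := by rw [zpow_neg, zpow_natCast, add_sub_cancel, inv_pow]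

theorem one_add_sub_mul_mul_pow_le_pow (ha : -1 < a) (k d : ℕ) :
    (1 + (k - d) * a) * (1 + a) ^ d ≤ (1 + a) ^ k := by
  have hpos : 0 < 1 + a := by linarith
  calc (1 + (k - d) * a) * (1 + a) ^ d
      ≤ (1 + a) ^ ((k : ℤ) - d) * (1 + a) ^ d := by
        gcongr
        exact_mod_cast one_add_mul_le_zpow ha ((k : ℤ) - d)
    _ = (1 + a) ^ k := by
        rw [zpow_sub₀ hpos.ne', zpow_natCast, zpow_natCast, div_mul_cancel₀ _ (pow_ne_zero _ hpos.ne')]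

end Bernoulli

theorem stmt_6_general (lam : ℝ) (hlam : 0 < lam) (k : ℕ)
    (α β : ℝ)
    (hα : α = 1 + (1 + lam) ^ k / (lam * (1 + k * lam)))
    (hβ : β = (1 + lam) / (1 + k * lam)) :
    ∀ d : ℕ,
      1 ≤ α * lam / (lam + (1 + lam) ^ d)
        + β * d * lam * (1 + lam) ^ ((d : ℝ) - 1) / (lam + (1 + lam) ^ d) := by
  intro d
  have hpos : 0 < 1 + lam := by linarith
  have hrpow : (1 + lam) ^ ((d : ℝ) - 1) = (1 + lam) ^ d / (1 + lam) := by
    rw [Real.rpow_sub hpos, Real.rpow_natCast, Real.rpow_one]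
  have hbernoulli := one_add_sub_mul_mul_pow_le_pow (by linarith : -1 < lam) k d
  rw [hα, hβ, hrpow, ← add_div, le_div_iff₀ (by positivity)]
  field_simp
  nlinarith [mul_le_mul_of_nonneg_left hbernoulli hlam.le]

theorem stmt_6 (lam : ℝ) (hlam : 0 < lam) (k : ℕ) (hk : 1 ≤ k)
    (α β : ℝ)
    (hα : α = 1 + (1 + lam) ^ k / (lam * (1 + k * lam)))
    (hβ : β = (1 + lam) / (1 + k * lam)) :
    ∀ d : ℕ,
      1 ≤ α * lam / (lam + (1 + lam) ^ d)
        + β * d * lam * (1 + lam) ^ ((d : ℝ) - 1) / (lam + (1 + lam) ^ d) :=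
  stmt_6_general lam hlam k α β hα hβ
end

section
/- For every real Δ ≥ 4, setting k = ⌊ln Δ · (ln Δ − 2 ln ln Δ)⌋ and λ = 1/ln Δ, one has 1 + kλ ≥ ln Δ − 2 ln ln Δ, and consequently ((1+λ)^k + λ(1+λ)Δ)/(λ(1+kλ)) ≤ (1 + 2/ln Δ) · Δ/(ln Δ − 2 ln ln Δ). -/
theorem stmt_7 (Δ : ℝ) (hΔ : 4 ≤ Δ)
    (k : ℤ) (hk : k = ⌊Real.log Δ * (Real.log Δ - 2 * Real.log (Real.log Δ))⌋)
    (lam : ℝ) (hlam : lam = 1 / Real.log Δ) :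
    Real.log Δ - 2 * Real.log (Real.log Δ) ≤ 1 + k * lam ∧
    ((1 + lam) ^ k + lam * (1 + lam) * Δ) / (lam * (1 + k * lam)) ≤
      (1 + 2 / Real.log Δ) * Δ / (Real.log Δ - 2 * Real.log (Real.log Δ)) := by
  subst hlam
  have hΔ0 : (0:ℝ) < Δ := by linarith
  set L := Real.log Δ with hLdef
  have hL4 : Real.log 4 ≤ L := by
    rw [hLdef]
    exact Real.log_le_log (by norm_num) hΔ
  have h42 : Real.log 4 = 2 * Real.log 2 := by
    rw [show (4:ℝ) = 2^2 by norm_num, Real.log_pow]; push_cast; ring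
  have hlog2 := Real.log_two_gt_d9
  have hL1 : 1 < L := by rw [h42] at hL4; linarith
  have hL0 : (0:ℝ) < L := by linarith
  set A := L - 2 * Real.log L with hAdef
  -- positivity of A
  set s := Real.sqrt L with hsdef
  have hs1 : 1 < s := by
    have : Real.sqrt 1 < Real.sqrt L := Real.sqrt_lt_sqrt (by norm_num) hL1
    simpa [hsdef] using this
  have hsq : s ^ 2 = L := Real.sq_sqrt hL0.le
  have hlogs : Real.log L = 2 * Real.log s := by
    rw [← hsq, Real.log_pow]; push_cast; ring
  have hls : Real.log s < s - 1 :=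
    Real.log_lt_sub_one_of_pos (by linarith) (ne_of_gt hs1)
  have hA : 0 < A := by
    rw [hAdef, hlogs]
    nlinarith [sq_nonneg (s - 2), hsq, hls]
  -- k is a nonnegative integer
  have hk0 : 0 ≤ k := by
    rw [hk]
    exact Int.floor_nonneg.mpr (mul_nonneg hL0.le hA.le)
  obtain ⟨n, rfl⟩ := Int.eq_ofNat_of_zero_le hk0
  have hk_le : (n:ℝ) ≤ L * A := by
    have h := Int.floor_le (L * A)
    rw [← hk] at h
    exact_mod_cast h
  have hk_gt : L * A - 1 < (n:ℝ) := by
    have h := Int.sub_one_lt_floor (L * A)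
    rw [← hk] at h
    exact_mod_cast h
  have hinv : (0:ℝ) < 1 / L := by positivity
  -- part 1
  have part1 : A ≤ 1 + (n:ℝ) * (1 / L) := by
    rw [← sub_nonneg]
    have h : 1 + (n:ℝ) * (1/L) - A = (L + n - A * L) / L := by
      field_simp
    rw [h]
    apply div_nonneg _ hL0.le
    nlinarith [hk_gt, hL1]
  constructor
  · push_cast
    exact part1
  -- part 2
  have hb : (0:ℝ) ≤ 1 + 1/L := by positivity
  have h1 : (1 + 1/L) ≤ Real.exp (1/L) := by
    have := Real.add_one_le_exp (1/L); linarith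
  have h2 : (1 + 1/L)^n ≤ Real.exp (1/L)^n := pow_le_pow_left₀ hb h1 n
  have h3 : Real.exp (1/L)^n = Real.exp ((n:ℝ) * (1/L)) := (Real.exp_nat_mul _ n).symm
  have h4 : (n:ℝ) * (1/L) ≤ A := by
    have heq : (n:ℝ) * (1/L) = (n:ℝ) / L := by ring
    rw [heq, div_le_iff₀ hL0]
    nlinarith [hk_le]
  have h5 : Real.exp A = Δ / L^2 := by
    rw [hAdef, Real.exp_sub,
      show (2:ℝ) * Real.log L = Real.log (L^2) by rw [Real.log_pow]; push_cast; ring,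
      Real.exp_log (x := L^2) (by positivity), hLdef, Real.exp_log hΔ0]
  have hpow : (1 + 1/L)^n ≤ Δ / L^2 := by
    calc (1 + 1/L)^n ≤ Real.exp (1/L)^n := h2
      _ = Real.exp ((n:ℝ) * (1/L)) := h3
      _ ≤ Real.exp A := Real.exp_le_exp.mpr h4
      _ = Δ / L^2 := h5
  have hN : (1 + 1/L)^n + (1/L) * (1 + 1/L) * Δ ≤ ((1 + 2/L) * Δ) / L := by
    have heq : Δ / L^2 + (1/L) * (1 + 1/L) * Δ = ((1 + 2/L) * Δ) / L := by
      field_simp; ring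
    linarith [hpow]
  have hD : A / L ≤ (1/L) * (1 + (n:ℝ) * (1/L)) := by
    have h := mul_le_mul_of_nonneg_left part1 hinv.le
    calc A / L = (1/L) * A := by ring
      _ ≤ (1/L) * (1 + (n:ℝ) * (1/L)) := h
  have hDpos : 0 < A / L := div_pos hA hL0
  have hc : (0:ℝ) ≤ ((1 + 2/L) * Δ) / L := by
    have h2L : 0 < 2/L := div_pos two_pos hL0
    exact (div_pos (mul_pos (by linarith) hΔ0) hL0).le
  have hmain := div_le_div₀ hc hN hDpos hD
  have hconv : (((1 + 2/L) * Δ) / L) / (A / L) = (1 + 2/L) * Δ / A := by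
    field_simp
  push_cast
  rw [zpow_natCast]
  calc ((1 + 1/L)^n + (1/L) * (1 + 1/L) * Δ) / ((1/L) * (1 + (n:ℝ) * (1/L)))
      ≤ (((1 + 2/L) * Δ) / L) / (A / L) := hmain
    _ = (1 + 2/L) * Δ / A := hconv
end

section
/- For every real x ≥ 3, the minimum over positive integers k of (2x + 2^{k-3})/k satisfies: the minimizing k is greater than 3, and the minimum value is at most (2 ln 2 + o(1)) · x/ln x as x → ∞; concretely, min_k (2x + 2^{k-3})/k ≤ (2x + 2^{k₀-3})/k₀ where k₀ = ⌊4 + log₂ x − log₂ log₂ x⌋. -/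
theorem stmt_9 (x : ℝ) (hx : 3 ≤ x)
    (k₀ : ℤ) (hk₀ : k₀ = ⌊4 + Real.logb 2 x - Real.logb 2 (Real.logb 2 x)⌋) :
    4 ≤ k₀ ∧ (2 * x + 2 ^ (k₀ - 3)) / (k₀ : ℝ) ≤ 3 * x / Real.logb 2 x := by
  have hx0 : (0:ℝ) < x := by linarith
  have hl2 : (0.6931:ℝ) < Real.log 2 := lt_trans (by norm_num) Real.log_two_gt_d9
  have hl2' : Real.log 2 < 0.6932 := lt_trans Real.log_two_lt_d9 (by norm_num)
  have hl2pos : (0:ℝ) < Real.log 2 := by linarith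
  have hlog3 : (1:ℝ) < Real.log 3 := by
    have h := Real.exp_one_lt_d9
    exact (Real.lt_log_iff_exp_lt (by norm_num : (0:ℝ) < 3)).mpr (by linarith)
  set L := Real.logb 2 x with hL
  have hLlb : (1.44:ℝ) < L := by
    have h1 : Real.logb 2 3 ≤ L := Real.logb_le_logb_of_le (by norm_num) (by norm_num) hx
    have h2 : (1.44:ℝ) < Real.logb 2 3 := by
      rw [Real.logb, lt_div_iff₀ hl2pos]; nlinarith
    linarith
  have hL0 : (0:ℝ) < L := by linarith
  -- logb 2 L ≤ L
  have hlogL : Real.log L ≤ Real.log 2 + L/2 - 1 := by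
    have h := Real.log_le_sub_one_of_pos (show (0:ℝ) < L/2 by linarith)
    rw [Real.log_div (by linarith) (by norm_num)] at h
    linarith
  have hlogbL : Real.logb 2 L ≤ L := by
    rw [Real.logb, div_le_iff₀ hl2pos]; nlinarith
  have hk4 : 4 ≤ k₀ := by
    rw [hk₀]
    exact Int.le_floor.mpr (by push_cast; linarith)
  refine ⟨hk4, ?_⟩
  have hk_le : (k₀:ℝ) ≤ 4 + L - Real.logb 2 L := by
    rw [hk₀]; exact Int.floor_le _
  have hk_gt : 3 + L - Real.logb 2 L < (k₀:ℝ) := by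
    have := Int.lt_floor_add_one (4 + L - Real.logb 2 L)
    rw [hk₀]; push_cast; linarith [Int.lt_floor_add_one (4 + L - Real.logb 2 L)]
  -- 3 logb 2 L ≤ L + 7
  have hmain : 3 * Real.logb 2 L ≤ L + 7 := by
    have h9 : Real.log (L/9) ≤ L/9 - 1 := Real.log_le_sub_one_of_pos (by linarith)
    rw [Real.log_div (by linarith) (by norm_num)] at h9
    have hlog9 : Real.log 9 = 2 * Real.log 3 := by
      rw [show (9:ℝ) = 3^2 by norm_num, Real.log_pow]; push_cast; ring
    have hlog34 : Real.log 3 < 2 * Real.log 2 := by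
      have h4 : Real.log 4 = 2 * Real.log 2 := by
        rw [show (4:ℝ) = 2^2 by norm_num, Real.log_pow]; push_cast; ring
      have := Real.log_lt_log (by norm_num : (0:ℝ) < 3) (by norm_num : (3:ℝ) < 4)
      linarith
    rw [Real.logb, ← mul_div_assoc, div_le_iff₀ hl2pos]
    nlinarith [mul_lt_mul_of_pos_right hLlb (show (0:ℝ) < Real.log 2 - 1/3 by linarith)]
  have h2k : 2*L + 2 ≤ 3 * (k₀:ℝ) := by linarith
  -- bound the power
  have hk0pos : (0:ℝ) < (k₀:ℝ) := by exact_mod_cast lt_of_lt_of_le (by norm_num) hk4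
  have hpow : (2:ℝ) ^ (k₀ - 3) ≤ 2 * x / L := by
    have e1 : (2:ℝ) ^ (k₀ - 3) = (2:ℝ) ^ (((k₀:ℝ)) - 3) := by
      rw [← Real.rpow_intCast 2 (k₀ - 3)]; push_cast; ring_nf
    rw [e1]
    have e2 : (2:ℝ) ^ ((1:ℝ) + L - Real.logb 2 L) = 2 * x / L := by
      rw [Real.rpow_sub (by norm_num), Real.rpow_add (by norm_num), Real.rpow_one,
        Real.rpow_logb (by norm_num) (by norm_num) hL0]
      have : (2:ℝ) ^ (L:ℝ) = x := by
        rw [hL, Real.rpow_logb (by norm_num) (by norm_num) hx0]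
      rw [this]
    rw [← e2]
    exact Real.rpow_le_rpow_of_exponent_le (by norm_num) (by linarith)
  calc (2 * x + 2 ^ (k₀ - 3)) / (k₀:ℝ) ≤ (2*x + 2*x/L) / (k₀:ℝ) := by
        gcongr
    _ ≤ 3 * x / L := by
        rw [div_le_div_iff₀ hk0pos hL0]
        have : 2*x/L*L = 2*x := by field_simp
        nlinarith [mul_le_mul_of_nonneg_left h2k hx0.le]
end

section
/- Define f(0) = 1 and f(d) = (1 + (d² − d)·f(d−1))/(d² + 1) for integers d ≥ 1. Then f is strictly decreasing on non-negative integers, f(d) > 0 for all d, and d·f(d) is strictly increasing; in particular f(3) = 17/50, f(4) = 127/425 and f(5) = 593/2210. -/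
theorem stmt_15 (f : ℕ → ℚ) (h0 : f 0 = 1)
    (hrec : ∀ d : ℕ, 1 ≤ d →
      f d = (1 + ((d : ℚ) ^ 2 - d) * f (d - 1)) / ((d : ℚ) ^ 2 + 1)) :
    StrictAnti f ∧ (∀ d, 0 < f d) ∧ StrictMono (fun d : ℕ => (d : ℚ) * f d) ∧
    f 3 = 17 / 50 ∧ f 4 = 127 / 425 ∧ f 5 = 593 / 2210 := by
  have hstep : ∀ d : ℕ, f (d+1) = (1 + (d:ℚ)*((d:ℚ)+1) * f d)/((d:ℚ)^2 + 2*d + 2) := by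
    intro d
    have h := hrec (d+1) (by omega)
    simp only [Nat.add_sub_cancel] at h
    rw [h]
    push_cast
    ring_nf
  have hbound : ∀ d : ℕ, 1 < ((d:ℚ)+2) * f d ∧ f d ≤ 1 := by
    intro d
    induction d with
    | zero => rw [h0]; norm_num
    | succ d ih =>
      obtain ⟨h1, h2⟩ := ih
      have hd : (0:ℚ) ≤ (d:ℚ) := Nat.cast_nonneg d
      have hden : (0:ℚ) < (d:ℚ)^2 + 2*d + 2 := by positivity
      have h3 : (0:ℚ) ≤ (d:ℚ)*((d:ℚ)+1)*((d:ℚ)+3) := by positivity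
      have hkey := mul_le_mul_of_nonneg_left h1.le h3
      have hdd : (0:ℚ) ≤ (d:ℚ)*((d:ℚ)+1) := by positivity
      have hkey2 := mul_le_mul_of_nonneg_left h2 hdd
      constructor
      · rw [hstep d, ← mul_div_assoc, lt_div_iff₀ hden]
        push_cast
        nlinarith [hkey, hd, sq_nonneg (d:ℚ), mul_nonneg hd hd]
      · rw [hstep d, div_le_one hden]
        nlinarith [hkey2, hd]
  have hpos : ∀ d, 0 < f d := by
    intro d
    have h1 := (hbound d).1
    have : (0:ℚ) < (d:ℚ)+2 := by positivity
    nlinarith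
  have hanti : StrictAnti f := by
    apply strictAnti_nat_of_succ_lt
    intro d
    obtain ⟨h1, h2⟩ := hbound d
    have hd : (0:ℚ) ≤ (d:ℚ) := Nat.cast_nonneg d
    have hden : (0:ℚ) < (d:ℚ)^2 + 2*d + 2 := by positivity
    rw [hstep d, div_lt_iff₀ hden]
    nlinarith [h1, hd]
  have hmono : StrictMono (fun d : ℕ => (d : ℚ) * f d) := by
    apply strictMono_nat_of_lt_succ
    intro d
    obtain ⟨h1, h2⟩ := hbound d
    have hd : (0:ℚ) ≤ (d:ℚ) := Nat.cast_nonneg d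
    have hden : (0:ℚ) < (d:ℚ)^2 + 2*d + 2 := by positivity
    show (d:ℚ) * f d < ((d+1 : ℕ):ℚ) * f (d+1)
    rw [hstep d]
    push_cast
    rw [← mul_div_assoc, lt_div_iff₀ hden]
    nlinarith [h2, hd, mul_le_mul_of_nonneg_left h2 hd]
  have hf1 : f 1 = 1/2 := by
    rw [hrec 1 (by norm_num)]; norm_num [h0]
  have hf2 : f 2 = 2/5 := by
    rw [hrec 2 (by norm_num)]; norm_num [hf1]
  have hf3 : f 3 = 17/50 := by
    rw [hrec 3 (by norm_num)]; norm_num [hf2]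
  have hf4 : f 4 = 127/425 := by
    rw [hrec 4 (by norm_num)]; norm_num [hf3]
  have hf5 : f 5 = 593/2210 := by
    rw [hrec 5 (by norm_num)]; norm_num [hf4]
  exact ⟨hanti, hpos, hmono, hf3, hf4, hf5⟩
end

section
/- Let G be a graph, I a maximum independent set of G, v a vertex, J = I \ N[v], and W = N[v] \ N(J). If the induced subgraph G[W] is not a clique, then v ∉ I and |I ∩ (W \ {v})| ≥ 2; if G[W] is a clique, then |I ∩ W| = 1. -/
open Finset

variable {V : Type*}

/-- `s` is an independent set of `G`. -/
def IsIndep (G : SimpleGraph V) (s : Finset V) : Prop :=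
  ∀ a ∈ s, ∀ b ∈ s, ¬ G.Adj a b

open scoped Classical in
/-- The external neighbourhood of `J`: vertices outside `J` with a neighbour in `J`. -/
noncomputable def extNbhd [Fintype V] (G : SimpleGraph V) (J : Finset V) : Finset V :=
  univ.filter (fun v => v ∉ J ∧ ∃ u ∈ J, G.Adj u v)

open scoped Classical in
theorem stmt_19 [Fintype V] (G : SimpleGraph V) [DecidableRel G.Adj]
    (I : Finset V)
    (hI : IsIndep G I) (hmax : ∀ s : Finset V, IsIndep G s → s.card ≤ I.card)
    (v : V) (J W : Finset V)
    (hJ : J = I \ insert v (G.neighborFinset v))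
    (hW : W = insert v (G.neighborFinset v) \ extNbhd G J) :
    (¬ G.IsClique (W : Set V) → v ∉ I ∧ 2 ≤ (I ∩ W.erase v).card) ∧
    (G.IsClique (W : Set V) → (I ∩ W).card = 1) := by
  classical
  have hJI : J ⊆ I := by rw [hJ]; exact sdiff_subset
  have hWN : W ⊆ insert v (G.neighborFinset v) := by rw [hW]; exact sdiff_subset
  have hJN : ∀ u ∈ J, u ∉ insert v (G.neighborFinset v) := by
    intro u hu; rw [hJ] at hu; exact (mem_sdiff.mp hu).2
  have hWJ : ∀ w ∈ W, w ∉ J := fun w hw hwJ => hJN w hwJ (hWN hw)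
  -- no edges between J and W
  have hJadj : ∀ u ∈ J, ∀ w ∈ W, ¬ G.Adj u w := by
    intro u hu w hw hadj
    have hwe : w ∈ extNbhd G J := by
      simp only [extNbhd, mem_filter, mem_univ, true_and]
      exact ⟨hWJ w hw, u, hu, hadj⟩
    rw [hW] at hw
    exact (mem_sdiff.mp hw).2 hwe
  have hvW : v ∈ W := by
    rw [hW, mem_sdiff]
    refine ⟨mem_insert_self _ _, ?_⟩
    simp only [extNbhd, mem_filter, mem_univ, true_and, not_and, not_exists]
    intro hvJ u hu hadj
    exact hJN u hu (mem_insert_of_mem (by rw [SimpleGraph.mem_neighborFinset]; exact hadj.symm))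
  have hIW : I ∩ W = I \ J := by
    ext u
    simp only [mem_inter, mem_sdiff]
    constructor
    · rintro ⟨huI, huW⟩
      refine ⟨huI, fun huJ => hWJ u huW huJ⟩
    · rintro ⟨huI, huJ⟩
      have huN : u ∈ insert v (G.neighborFinset v) := by
        by_contra h
        exact huJ (by rw [hJ]; exact mem_sdiff.mpr ⟨huI, h⟩)
      refine ⟨huI, ?_⟩
      rw [hW, mem_sdiff]
      refine ⟨huN, ?_⟩
      simp only [extNbhd, mem_filter, mem_univ, true_and, not_and, not_exists]
      intro _ w hw hadj
      exact hI w (hJI hw) u huI hadj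
  have hcard : I.card = J.card + (I ∩ W).card := by
    have := card_le_card hJI
    rw [hIW, card_sdiff_of_subset hJI]
    omega
  -- key: any independent subset of W has card ≤ |I ∩ W|
  have hkey : ∀ S : Finset V, S ⊆ W → IsIndep G S → S.card ≤ (I ∩ W).card := by
    intro S hSW hSind
    have hind : IsIndep G (J ∪ S) := by
      intro a ha b hb hadj
      rcases mem_union.mp ha with haJ | haS <;> rcases mem_union.mp hb with hbJ | hbS
      · exact hI a (hJI haJ) b (hJI hbJ) hadj
      · exact hJadj a haJ b (hSW hbS) hadj
      · exact hJadj b hbJ a (hSW haS) hadj.symm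
      · exact hSind a haS b hbS hadj
    have hdisj : Disjoint J S := by
      rw [disjoint_left]
      intro a haJ haS
      exact hWJ a (hSW haS) haJ
    have := hmax (J ∪ S) hind
    rw [card_union_of_disjoint hdisj, hcard] at this
    omega
  have hone : 1 ≤ (I ∩ W).card := by
    have := hkey {v} (by simpa using hvW) (by
      intro a ha b hb hadj
      simp only [mem_singleton] at ha hb
      subst ha; subst hb; exact G.irrefl hadj)
    simpa using this
  constructor
  · intro hnc
    have hex : ∃ a ∈ W, ∃ b ∈ W, a ≠ b ∧ ¬ G.Adj a b := by
      by_contra h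
      push_neg at h
      exact hnc fun a ha b hb hne =>
        h a (by exact_mod_cast ha) b (by exact_mod_cast hb) hne
    obtain ⟨a, haW, b, hbW, hab, hnadj⟩ := hex
    have h2 : 2 ≤ (I ∩ W).card := by
      have hsub : ({a, b} : Finset V) ⊆ W := by
        intro x hx
        rcases mem_insert.mp hx with h | h
        · rwa [h]
        · rw [mem_singleton] at h; rwa [h]
      have hind : IsIndep G {a, b} := by
        intro x hx y hy hadj
        simp only [mem_insert, mem_singleton] at hx hy
        rcases hx with rfl | rfl <;> rcases hy with rfl | rfl
        · exact G.irrefl hadj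
        · exact hnadj hadj
        · exact hnadj hadj.symm
        · exact G.irrefl hadj
      have := hkey {a, b} hsub hind
      rwa [card_pair hab] at this
    have hvnotI : v ∉ I := by
      intro hvI
      obtain ⟨u, huIW, hune⟩ : ∃ u ∈ I ∩ W, u ≠ v := by
        obtain ⟨x, hx, y, hy, hne⟩ := Finset.one_lt_card.mp (by omega : 1 < (I ∩ W).card)
        by_cases h : x = v
        · exact ⟨y, hy, fun he => hne (by rw [h, he])⟩
        · exact ⟨x, hx, h⟩
      rcases mem_inter.mp huIW with ⟨huI, huW⟩
      rcases mem_insert.mp (hWN huW) with h | h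
      · exact hune h
      · exact hI v hvI u huI ((SimpleGraph.mem_neighborFinset _ _ _).mp h)
    have herase : I ∩ W.erase v = I ∩ W := by
      ext u
      simp only [mem_inter, mem_erase]
      constructor
      · rintro ⟨h1, _, h2⟩; exact ⟨h1, h2⟩
      · rintro ⟨h1, h2⟩
        exact ⟨h1, fun he => hvnotI (he ▸ h1), h2⟩
    rw [herase]
    exact ⟨hvnotI, h2⟩
  · intro hc
    have hle : (I ∩ W).card ≤ 1 := by
      rw [card_le_one]
      intro a ha b hb
      rcases mem_inter.mp ha with ⟨haI, haW⟩
      rcases mem_inter.mp hb with ⟨hbI, hbW⟩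
      by_contra hne
      exact hI a haI b hbI (hc (by exact_mod_cast haW) (by exact_mod_cast hbW) hne)
    omega
end
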